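/- arXiv:2310.08236 — 2 statements merged into one kernel-verified Lean document; each statement's English description precedes it below -/
import Mathlib

section
/- Let n ≥ 1 and let f : ℝⁿ → ℝ be rapidly decreasing, i.e. for every m ∈ ℕ one has sup_{x ∈ ℝⁿ} ‖x‖₂^m · |f(x)| < ∞, where ‖·‖₂ is the Euclidean norm. Then there exists a Schwartz function φ ∈ S(ℝⁿ) such that: (i) φ(x) > 0 for every x ∈ ℝⁿ; (ii) φ is spherical and radially monotone decreasing, i.e. there is a function g : ℝ → ℝ with φ(x) = g(‖x‖₂) for all x and g(r₁) ≥ g(r₂) whenever 0 ≤ r₁ ≤ r₂; and (iii) |f(x)| ≤ φ(x) for all x ∈ ℝⁿ. -/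
open Real Filter Topology Finset
open scoped ContDiff

noncomputable section

namespace WeilSchwartzAux

lemma expNegInvGlue_monotone : Monotone expNegInvGlue := by
  intro a b hab
  rcases le_or_gt a 0 with ha | ha
  · rw [expNegInvGlue.zero_of_nonpos ha]
    exact expNegInvGlue.nonneg b
  · have hb : 0 < b := ha.trans_le hab
    rw [expNegInvGlue, expNegInvGlue, if_neg (not_le.2 ha), if_neg (not_le.2 hb)]
    apply Real.exp_le_exp.2
    have := one_div_le_one_div_of_le ha hab
    simp only [one_div] at this
    linarith

lemma smoothTransition_monotone : Monotone Real.smoothTransition := by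
  intro a b hab
  have h1 : expNegInvGlue a ≤ expNegInvGlue b := expNegInvGlue_monotone hab
  have h2 : expNegInvGlue (1 - b) ≤ expNegInvGlue (1 - a) := expNegInvGlue_monotone (by linarith)
  rw [Real.smoothTransition, Real.smoothTransition,
    div_le_div_iff₀ (Real.smoothTransition.pos_denom a) (Real.smoothTransition.pos_denom b)]
  have h3 : 0 ≤ expNegInvGlue a := expNegInvGlue.nonneg _
  have h4 : 0 ≤ expNegInvGlue (1 - b) := expNegInvGlue.nonneg _
  nlinarith

/-- 1D radial bump: equals 1 on `|t| ≤ k+1` and 0 for `|t| ≥ k+2`. -/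
def bump (k : ℕ) (t : ℝ) : ℝ :=
  Real.smoothTransition (((k : ℝ) + 2) - t) * Real.smoothTransition (((k : ℝ) + 2) + t)

lemma bump_contDiff (k : ℕ) : ContDiff ℝ ∞ (bump k) := by
  apply ContDiff.mul
  · exact Real.smoothTransition.contDiff.comp (contDiff_const.sub contDiff_id)
  · exact Real.smoothTransition.contDiff.comp (contDiff_const.add contDiff_id)

lemma bump_nonneg (k : ℕ) (t : ℝ) : 0 ≤ bump k t :=
  mul_nonneg (Real.smoothTransition.nonneg _) (Real.smoothTransition.nonneg _)

lemma bump_le_one (k : ℕ) (t : ℝ) : bump k t ≤ 1 :=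
  mul_le_one₀ (Real.smoothTransition.le_one _) (Real.smoothTransition.nonneg _)
    (Real.smoothTransition.le_one _)

lemma bump_eq_one (k : ℕ) (t : ℝ) (h : |t| ≤ (k : ℝ) + 1) : bump k t = 1 := by
  rw [abs_le] at h
  rw [bump, Real.smoothTransition.one_of_one_le (by linarith [h.2]),
    Real.smoothTransition.one_of_one_le (x := ((k : ℝ) + 2) + t) (by linarith [h.1]), mul_one]

lemma bump_eq_zero (k : ℕ) (t : ℝ) (h : (k : ℝ) + 2 ≤ |t|) : bump k t = 0 := by
  rcases le_abs.mp h with h' | h'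
  · rw [bump, Real.smoothTransition.zero_of_nonpos (by linarith), zero_mul]
  · rw [bump, Real.smoothTransition.zero_of_nonpos (x := ((k : ℝ) + 2) + t) (by linarith), mul_zero]

lemma bump_pos (k : ℕ) (t : ℝ) (h : |t| < (k : ℝ) + 2) : 0 < bump k t := by
  rw [abs_lt] at h
  exact mul_pos (Real.smoothTransition.pos_of_pos (by linarith [h.2]))
    (Real.smoothTransition.pos_of_pos (by linarith [h.1]))

lemma bump_anti (k : ℕ) {t₁ t₂ : ℝ} (h1 : 0 ≤ t₁) (h2 : t₁ ≤ t₂) : bump k t₂ ≤ bump k t₁ := by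
  have hk : (0 : ℝ) ≤ (k : ℝ) := Nat.cast_nonneg k
  have e : ∀ t : ℝ, 0 ≤ t → bump k t = Real.smoothTransition (((k : ℝ) + 2) - t) := by
    intro t ht
    rw [bump, Real.smoothTransition.one_of_one_le (x := ((k : ℝ) + 2) + t) (by linarith), mul_one]
  rw [e t₁ h1, e t₂ (h1.trans h2)]
  exact smoothTransition_monotone (by linarith)
lemma iteratedDeriv_const' (j : ℕ) (hj : j ≠ 0) (c : ℝ) (s : ℝ) :
    iteratedDeriv j (fun _ : ℝ => c) s = 0 := by
  rw [iteratedDeriv_eq_iteratedFDeriv, iteratedFDeriv_const_of_ne hj]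
  simp

lemma exists_theta_bound (j : ℕ) :
    ∃ A : ℝ, 0 ≤ A ∧ ∀ s : ℝ, |iteratedDeriv j Real.smoothTransition s| ≤ A := by
  obtain ⟨A, hA⟩ := (isCompact_Icc (a := (0:ℝ)) (b := 1)).exists_bound_of_continuousOn
    (Continuous.continuousOn
      (Real.smoothTransition.contDiff.continuous_iteratedDeriv j (by exact_mod_cast le_top)))
  refine ⟨max A 0, le_max_right _ _, fun s => ?_⟩
  rcases le_or_gt s 0 with hs | hs
  · rcases eq_or_lt_of_le hs with rfl | hs'
    · exact le_max_of_le_left (by simpa using hA 0 ⟨le_rfl, zero_le_one⟩)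
    · rcases eq_or_ne j 0 with rfl | hj
      · simp only [iteratedDeriv_zero]
        rw [Real.smoothTransition.zero_of_nonpos hs]
        simp
      · have : iteratedDeriv j Real.smoothTransition s
            = iteratedDeriv j (fun _ : ℝ => (0:ℝ)) s := by
          apply Filter.EventuallyEq.iteratedDeriv_eq
          filter_upwards [Iio_mem_nhds hs'] with y hy
          exact Real.smoothTransition.zero_of_nonpos hy.le
        rw [this, iteratedDeriv_const' j hj]
        simp
  · rcases le_or_gt s 1 with hs1 | hs1
    · exact le_max_of_le_left (by simpa using hA s ⟨hs.le, hs1⟩)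
    · rcases eq_or_ne j 0 with rfl | hj
      · simp only [iteratedDeriv_zero]
        rw [Real.smoothTransition.one_of_one_le hs1.le]
        exact le_max_of_le_left (by simpa using hA 1 ⟨zero_le_one, le_rfl⟩)
      · have : iteratedDeriv j Real.smoothTransition s
            = iteratedDeriv j (fun _ : ℝ => (1:ℝ)) s := by
          apply Filter.EventuallyEq.iteratedDeriv_eq
          filter_upwards [Ioi_mem_nhds hs1] with y hy
          exact Real.smoothTransition.one_of_one_le hy.le
        rw [this, iteratedDeriv_const' j hj]
        simp

lemma exists_comp_bound (j : ℕ) :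
    ∃ A : ℝ, 0 ≤ A ∧ ∀ (c t : ℝ),
      ‖iteratedFDeriv ℝ j (fun s => Real.smoothTransition (c - s)) t‖ ≤ A ∧
      ‖iteratedFDeriv ℝ j (fun s => Real.smoothTransition (c + s)) t‖ ≤ A := by
  obtain ⟨A, hA0, hA⟩ := exists_theta_bound j
  refine ⟨A, hA0, fun c t => ⟨?_, ?_⟩⟩
  · rw [norm_iteratedFDeriv_eq_norm_iteratedDeriv]
    have h1 : (fun s : ℝ => Real.smoothTransition (c - s))
        = fun s => (fun z => Real.smoothTransition (c + z)) (-s) := by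
      funext s; simp [sub_eq_add_neg]
    rw [h1, iteratedDeriv_comp_neg j (fun z => Real.smoothTransition (c + z)) t,
      iteratedDeriv_comp_const_add]
    rw [norm_smul]
    simp only [norm_pow, norm_neg, norm_one, one_pow, one_mul, Real.norm_eq_abs]
    exact hA _
  · rw [norm_iteratedFDeriv_eq_norm_iteratedDeriv, iteratedDeriv_comp_const_add,
      Real.norm_eq_abs]
    exact hA _

lemma exists_bump_bound (nn : ℕ) :
    ∃ A : ℝ, 0 ≤ A ∧ ∀ (k : ℕ) (t : ℝ), ‖iteratedFDeriv ℝ nn (bump k) t‖ ≤ A := by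
  choose A hA0 hA using exists_comp_bound
  refine ⟨∑ i ∈ Finset.range (nn+1), (nn.choose i : ℝ) * A i * A (nn - i),
    Finset.sum_nonneg fun i _ => mul_nonneg (mul_nonneg (by positivity) (hA0 i))
      (hA0 (nn - i)), fun k t => ?_⟩
  have hf : ContDiff ℝ ∞ (fun s : ℝ => Real.smoothTransition (((k:ℝ)+2) - s)) :=
    Real.smoothTransition.contDiff.comp (contDiff_const.sub contDiff_id)
  have hg : ContDiff ℝ ∞ (fun s : ℝ => Real.smoothTransition (((k:ℝ)+2) + s)) :=
    Real.smoothTransition.contDiff.comp (contDiff_const.add contDiff_id)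
  refine (norm_iteratedFDeriv_mul_le hf hg t (by exact_mod_cast le_top)).trans ?_
  apply Finset.sum_le_sum
  intro i hi
  have h1 := (hA i (((k:ℝ)+2)) t).1
  have h2 := (hA (nn - i) (((k:ℝ)+2)) t).2
  calc (nn.choose i : ℝ) * ‖iteratedFDeriv ℝ i (fun s : ℝ =>
          Real.smoothTransition (((k:ℝ)+2) - s)) t‖ *
        ‖iteratedFDeriv ℝ (nn - i) (fun s : ℝ => Real.smoothTransition (((k:ℝ)+2) + s)) t‖
      ≤ (nn.choose i : ℝ) * A i *
        ‖iteratedFDeriv ℝ (nn - i) (fun s : ℝ => Real.smoothTransition (((k:ℝ)+2) + s)) t‖ := by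
        apply mul_le_mul_of_nonneg_right _ (norm_nonneg _)
        exact mul_le_mul_of_nonneg_left h1 (by positivity)
    _ ≤ (nn.choose i : ℝ) * A i * A (nn - i) :=
        mul_le_mul_of_nonneg_left h2 (mul_nonneg (by positivity) (hA0 i))

lemma exists_bump_term_bound (i nn : ℕ) :
    ∃ A : ℝ, 0 ≤ A ∧ ∀ (k : ℕ) (t : ℝ),
      |t| ^ i * ‖iteratedFDeriv ℝ nn (bump k) t‖ ≤ A * ((k : ℝ) + 2) ^ i := by
  obtain ⟨A, hA0, hA⟩ := exists_bump_bound nn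
  refine ⟨A, hA0, fun k t => ?_⟩
  rcases le_or_gt |t| ((k:ℝ)+2) with h | h
  · calc |t| ^ i * ‖iteratedFDeriv ℝ nn (bump k) t‖
        ≤ ((k:ℝ)+2) ^ i * A := by
          exact mul_le_mul (pow_le_pow_left₀ (abs_nonneg t) h i) (hA k t)
            (norm_nonneg _) (by positivity)
    _ = A * ((k:ℝ)+2) ^ i := mul_comm _ _
  · have hz : ‖iteratedFDeriv ℝ nn (bump k) t‖ = 0 := by
      rw [norm_iteratedFDeriv_eq_norm_iteratedDeriv]
      have heq : iteratedDeriv nn (bump k) t = iteratedDeriv nn (fun _ : ℝ => (0:ℝ)) t := by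
        apply Filter.EventuallyEq.iteratedDeriv_eq
        have hopen : IsOpen {y : ℝ | (k:ℝ)+2 < |y|} := isOpen_lt continuous_const continuous_abs
        filter_upwards [hopen.mem_nhds h] with y hy using bump_eq_zero k y hy.le
      rcases eq_or_ne nn 0 with rfl | hnn
      · simp only [heq, iteratedDeriv_zero]; simp
      · rw [heq, iteratedDeriv_const' nn hnn]; simp
    rw [hz, mul_zero]
    positivity

section Psi

variable (c : ℕ → ℝ)

/-- The 1D envelope profile. -/
def psi (t : ℝ) : ℝ := ∑' k, c k * bump k t

variable (hpos : ∀ k, 0 < c k)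
variable (hdecay : ∀ i : ℕ, ∃ M : ℝ, 0 ≤ M ∧ ∀ k : ℕ, c k * ((k : ℝ) + 1) ^ i ≤ M)

include hpos hdecay in
lemma summable_weighted (i : ℕ) : Summable (fun k : ℕ => c k * ((k : ℝ) + 2) ^ i) := by
  obtain ⟨M, hM0, hM⟩ := hdecay (i + 2)
  have hbase : Summable (fun k : ℕ => 1 / ((k : ℝ) + 1) ^ 2) := by
    have h0 : Summable (fun k : ℕ => 1 / ((k : ℝ)) ^ 2) :=
      Real.summable_one_div_nat_pow.mpr one_lt_two
    have := (summable_nat_add_iff 1).mpr h0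
    apply this.congr
    intro k
    push_cast
    ring
  apply Summable.of_nonneg_of_le
    (fun k => mul_nonneg (hpos k).le (by positivity))
    (fun k => ?_) (hbase.mul_left ((2:ℝ) ^ i * M))
  have hk1 : (0:ℝ) < (k : ℝ) + 1 := by positivity
  have h1 : c k * ((k : ℝ) + 1) ^ i ≤ M / ((k : ℝ) + 1) ^ 2 := by
    rw [le_div_iff₀ (by positivity)]
    calc c k * ((k : ℝ) + 1) ^ i * ((k : ℝ) + 1) ^ 2
        = c k * ((k : ℝ) + 1) ^ (i + 2) := by rw [pow_add]; ring
      _ ≤ M := hM k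
  calc c k * ((k : ℝ) + 2) ^ i ≤ c k * (2 * ((k : ℝ) + 1)) ^ i := by
        apply mul_le_mul_of_nonneg_left _ (hpos k).le
        apply pow_le_pow_left₀ (by positivity) (by linarith)
    _ = 2 ^ i * (c k * ((k : ℝ) + 1) ^ i) := by rw [mul_pow]; ring
    _ ≤ 2 ^ i * (M / ((k : ℝ) + 1) ^ 2) := by
        apply mul_le_mul_of_nonneg_left h1 (by positivity)
    _ = 2 ^ i * M * (1 / ((k : ℝ) + 1) ^ 2) := by ring

include hpos hdecay in
lemma summable_c : Summable c := by
  have := summable_weighted c hpos hdecay 0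
  simpa using this

include hpos hdecay in
lemma summable_term (t : ℝ) : Summable (fun k : ℕ => c k * bump k t) := by
  apply Summable.of_nonneg_of_le
    (fun k => mul_nonneg (hpos k).le (bump_nonneg k t))
    (fun k => ?_) (summable_c c hpos hdecay)
  calc c k * bump k t ≤ c k * 1 :=
        mul_le_mul_of_nonneg_left (bump_le_one k t) (hpos k).le
    _ = c k := mul_one _

include hpos hdecay in
lemma psi_local (N : ℕ) (s : ℝ) (hs : |s| < (N : ℝ) + 1) :
    psi c s = (∑ k ∈ Finset.range N, c k * bump k s) + ∑' k, c (k + N) := by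
  rw [psi, ← Summable.sum_add_tsum_nat_add N (summable_term c hpos hdecay s)]
  congr 1
  apply tsum_congr
  intro k
  rw [bump_eq_one (k + N) s ?_, mul_one]
  push_cast
  have : (0:ℝ) ≤ (k : ℝ) := Nat.cast_nonneg k
  linarith

include hpos hdecay in
lemma psi_pos (t : ℝ) : 0 < psi c t := by
  apply Summable.tsum_pos (summable_term c hpos hdecay t)
    (fun k => mul_nonneg (hpos k).le (bump_nonneg k t)) ⌈|t|⌉₊
  apply mul_pos (hpos _)
  apply bump_pos
  have := Nat.le_ceil |t|
  linarith

include hpos hdecay in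
lemma psi_anti {t₁ t₂ : ℝ} (h1 : 0 ≤ t₁) (h2 : t₁ ≤ t₂) : psi c t₂ ≤ psi c t₁ := by
  apply Summable.tsum_le_tsum _ (summable_term c hpos hdecay t₂) (summable_term c hpos hdecay t₁)
  intro k
  exact mul_le_mul_of_nonneg_left (bump_anti k h1 h2) (hpos k).le

include hpos hdecay in
lemma le_psi (k : ℕ) (t : ℝ) (h : |t| ≤ (k : ℝ) + 1) : c k ≤ psi c t := by
  have h1 : c k = c k * bump k t := by rw [bump_eq_one k t h, mul_one]
  rw [h1]
  exact Summable.le_tsum (summable_term c hpos hdecay t) k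
    (fun j _ => mul_nonneg (hpos j).le (bump_nonneg j t))

include hpos hdecay in
lemma psi_eventually_eq (t : ℝ) :
    psi c =ᶠ[nhds t] fun s => (∑ k ∈ Finset.range (⌈|t|⌉₊ + 1), c k * bump k s)
      + ∑' k, c (k + (⌈|t|⌉₊ + 1)) := by
  set N := ⌈|t|⌉₊ + 1 with hN
  have hopen : IsOpen {s : ℝ | |s| < (N : ℝ) + 1} :=
    isOpen_lt continuous_abs continuous_const
  have hmem : t ∈ {s : ℝ | |s| < (N : ℝ) + 1} := by
    have := Nat.le_ceil |t|
    simp only [Set.mem_setOf_eq, hN]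
    push_cast
    linarith
  filter_upwards [hopen.mem_nhds hmem] with s hs
  exact psi_local c hpos hdecay N s hs

include hpos hdecay in
lemma psi_contDiff : ContDiff ℝ ∞ (psi c) := by
  rw [contDiff_iff_contDiffAt]
  intro t
  have hsmooth : ContDiff ℝ ∞ (fun s => (∑ k ∈ Finset.range (⌈|t|⌉₊ + 1), c k * bump k s)
      + ∑' k, c (k + (⌈|t|⌉₊ + 1))) := by
    apply ContDiff.add _ contDiff_const
    apply ContDiff.sum
    intro k _
    exact contDiff_const.mul (bump_contDiff k)
  exact hsmooth.contDiffAt.congr_of_eventuallyEq (psi_eventually_eq c hpos hdecay t)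

include hpos hdecay in
lemma psi_decay (i nn : ℕ) :
    ∃ C : ℝ, ∀ t : ℝ, |t| ^ i * ‖iteratedFDeriv ℝ nn (psi c) t‖ ≤ C := by
  obtain ⟨A, hA0, hA⟩ := exists_bump_term_bound i nn
  have hS := summable_weighted c hpos hdecay i
  set S : ℝ := ∑' k, c k * ((k : ℝ) + 2) ^ i with hSdef
  have hS0 : 0 ≤ S := tsum_nonneg (fun k => mul_nonneg (hpos k).le (by positivity))
  refine ⟨A * S, fun t => ?_⟩
  rcases eq_or_ne nn 0 with rfl | hnn
  · -- zeroth derivative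
    rw [norm_iteratedFDeriv_zero, Real.norm_eq_abs,
      abs_of_nonneg (le_of_lt (psi_pos c hpos hdecay t))]
    rw [psi, ← tsum_mul_left]
    have hle : ∀ k : ℕ, |t| ^ i * (c k * bump k t) ≤ A * (c k * ((k : ℝ) + 2) ^ i) := by
      intro k
      have h := hA k t
      rw [norm_iteratedFDeriv_zero, Real.norm_eq_abs, abs_of_nonneg (bump_nonneg k t)] at h
      have := mul_le_mul_of_nonneg_left h (hpos k).le
      nlinarith [(hpos k).le, bump_nonneg k t, abs_nonneg t]
    calc (∑' k, |t| ^ i * (c k * bump k t))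
        ≤ ∑' k, A * (c k * ((k : ℝ) + 2) ^ i) := by
          apply Summable.tsum_le_tsum hle _ (hS.mul_left A)
          exact (summable_term c hpos hdecay t).mul_left _
      _ = A * S := tsum_mul_left
  · -- higher derivatives
    set N := ⌈|t|⌉₊ + 1 with hNdef
    have heq : ‖iteratedFDeriv ℝ nn (psi c) t‖
        = ‖iteratedFDeriv ℝ nn (fun s => (∑ k ∈ Finset.range N, c k * bump k s)
            + ∑' k, c (k + N)) t‖ := by
      rw [norm_iteratedFDeriv_eq_norm_iteratedDeriv,
        (psi_eventually_eq c hpos hdecay t).iteratedDeriv_eq nn,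
        ← norm_iteratedFDeriv_eq_norm_iteratedDeriv]
    rw [heq]
    have hGsmooth : ContDiff ℝ nn (fun s => ∑ k ∈ Finset.range N, c k * bump k s) := by
      apply ContDiff.sum
      intro k _
      exact (contDiff_const.mul (bump_contDiff k)).of_le (by exact_mod_cast le_top)
    have hadd : iteratedFDeriv ℝ nn (fun s => (∑ k ∈ Finset.range N, c k * bump k s)
        + ∑' k, c (k + N)) t
        = iteratedFDeriv ℝ nn (fun s => ∑ k ∈ Finset.range N, c k * bump k s) t := by
      rw [iteratedFDeriv_add_apply' hGsmooth.contDiffAt contDiff_const.contDiffAt,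
        iteratedFDeriv_const_of_ne hnn]
      simp
    rw [hadd]
    have hsum_eq : iteratedFDeriv ℝ nn (fun s => ∑ k ∈ Finset.range N, c k * bump k s) t
        = ∑ k ∈ Finset.range N, iteratedFDeriv ℝ nn (fun s => c k * bump k s) t := by
      have h := iteratedFDeriv_sum (𝕜 := ℝ) (u := Finset.range N)
        (f := fun k (s : ℝ) => c k * bump k s) (i := nn)
        (fun k _ => (contDiff_const.mul (bump_contDiff k)).of_le (by exact_mod_cast le_top))
      have h' := congrFun h t
      simpa using h'
    rw [hsum_eq]
    calc |t| ^ i * ‖∑ k ∈ Finset.range N, iteratedFDeriv ℝ nn (fun s => c k * bump k s) t‖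
        ≤ |t| ^ i * ∑ k ∈ Finset.range N, ‖iteratedFDeriv ℝ nn (fun s => c k * bump k s) t‖ := by
          apply mul_le_mul_of_nonneg_left (norm_sum_le _ _) (by positivity)
      _ = ∑ k ∈ Finset.range N, |t| ^ i * ‖iteratedFDeriv ℝ nn (fun s => c k * bump k s) t‖ := by
          rw [Finset.mul_sum]
      _ ≤ ∑ k ∈ Finset.range N, A * (c k * ((k : ℝ) + 2) ^ i) := by
          apply Finset.sum_le_sum
          intro k _
          have hsmul : iteratedFDeriv ℝ nn (fun s => c k * bump k s) t
              = c k • iteratedFDeriv ℝ nn (bump k) t := by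
            have := iteratedFDeriv_const_smul_apply' (𝕜 := ℝ) (f := bump k) (x := t)
              (a := c k) ((bump_contDiff k).of_le (n := ∞) (m := nn) (by exact_mod_cast le_top)).contDiffAt
            rw [← this]
            rfl
          rw [hsmul, norm_smul (c k) (iteratedFDeriv ℝ nn (bump k) t),
            Real.norm_eq_abs, abs_of_pos (hpos k)]
          have h := hA k t
          have := mul_le_mul_of_nonneg_left h (hpos k).le
          nlinarith [(hpos k).le, norm_nonneg (iteratedFDeriv ℝ nn (bump k) t), abs_nonneg t]
      _ ≤ A * S := by
          rw [← Finset.mul_sum]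
          apply mul_le_mul_of_nonneg_left _ hA0
          exact Summable.sum_le_tsum _ (fun k _ => mul_nonneg (hpos k).le (by positivity)) hS

/-- The 1D profile as a Schwartz function. -/
def psiSchwartz : SchwartzMap ℝ ℝ where
  toFun := psi c
  smooth' := psi_contDiff c hpos hdecay
  decay' := by
    intro k n
    obtain ⟨C, hC⟩ := psi_decay c hpos hdecay k n
    exact ⟨C, fun x => by rw [Real.norm_eq_abs]; exact hC x⟩

end Psi

lemma normSq_hasTemperateGrowth {E : Type*} [NormedAddCommGroup E] [InnerProductSpace ℝ E] :
    Function.HasTemperateGrowth (fun x : E => ‖x‖ ^ 2) := by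
  have hderiv : (fderiv ℝ (fun x : E => ‖x‖ ^ 2)) = fun x => (2 • (innerSL ℝ (E := E))) x := by
    funext x
    rw [(hasStrictFDerivAt_norm_sq x).hasFDerivAt.fderiv]
    simp
  apply Function.HasTemperateGrowth.of_fderiv (k := 2) (C := 1)
  · rw [hderiv]
    exact (2 • (innerSL ℝ (E := E))).hasTemperateGrowth
  · exact (contDiff_norm_sq ℝ (n := (1:ℕ∞))).differentiable (by norm_num)
  · intro x
    have h : ‖x‖ ^ 2 ≤ (1 + ‖x‖) ^ 2 := by nlinarith [norm_nonneg x]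
    calc ‖‖x‖ ^ 2‖ = ‖x‖ ^ 2 := by rw [Real.norm_eq_abs, abs_of_nonneg (by positivity)]
      _ ≤ 1 * (1 + ‖x‖) ^ 2 := by linarith

end WeilSchwartzAux

end

open WeilSchwartzAux in
/-- **Weil–Schwartz envelopes.**  If `f : ℝⁿ → ℝ` is rapidly decreasing, then there is a
Schwartz function `φ` which is everywhere positive, spherical and radially monotone
decreasing, and dominates `|f|`. -/
theorem weil_schwartz_envelope (n : ℕ) (hn : 1 ≤ n)
    (f : EuclideanSpace ℝ (Fin n) → ℝ)
    (hf : ∀ m : ℕ, ∃ C : ℝ, ∀ x : EuclideanSpace ℝ (Fin n), ‖x‖ ^ m * |f x| ≤ C) :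
    ∃ φ : SchwartzMap (EuclideanSpace ℝ (Fin n)) ℝ,
      (∀ x, 0 < φ x) ∧
      (∃ g : ℝ → ℝ, (∀ x, φ x = g ‖x‖) ∧
        ∀ r₁ r₂ : ℝ, 0 ≤ r₁ → r₁ ≤ r₂ → g r₂ ≤ g r₁) ∧
      (∀ x, |f x| ≤ φ x) := by
  classical
  choose C hC using hf
  set D : ℕ → ℝ := fun m => ∑ j ∈ Finset.range (m+1), (m.choose j : ℝ) * C (2*j) with hD
  have hfD : ∀ (m : ℕ) (x : EuclideanSpace ℝ (Fin n)), (1 + ‖x‖^2)^m * |f x| ≤ D m := by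
    intro m x
    have hexp : (1 + ‖x‖^2)^m = ∑ j ∈ Finset.range (m+1), ‖x‖^(2*j) * (m.choose j : ℝ) := by
      rw [add_comm, add_pow]
      apply Finset.sum_congr rfl
      intro j hj
      rw [one_pow, mul_one, ← pow_mul, mul_comm 2 j]
    rw [hexp, Finset.sum_mul]
    apply Finset.sum_le_sum
    intro j hj
    calc ‖x‖^(2*j) * (m.choose j : ℝ) * |f x|
        = (m.choose j : ℝ) * (‖x‖^(2*j) * |f x|) := by ring
      _ ≤ (m.choose j : ℝ) * C (2*j) :=
          mul_le_mul_of_nonneg_left (hC (2*j) x) (by positivity)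
  set Ee : ℕ → ℝ := fun m => |D m| + 1 with hEe
  have hEpos : ∀ m, 0 < Ee m := fun m => by positivity
  have hDE : ∀ m, D m ≤ Ee m := fun m => by
    have := le_abs_self (D m); simp only [hEe]; linarith
  set c : ℕ → ℝ :=
    fun k => (Finset.range (k+1)).inf' (Finset.nonempty_range_iff.mpr (Nat.succ_ne_zero k)) (fun m => Ee m / ((k:ℝ)+1)^m) with hc
  have hcpos : ∀ k, 0 < c k := by
    intro k
    rw [hc]
    rw [Finset.lt_inf'_iff]
    intro m hm
    have := hEpos m
    positivity
  have hcdecay : ∀ i : ℕ, ∃ M : ℝ, 0 ≤ M ∧ ∀ k : ℕ, c k * ((k:ℝ)+1)^i ≤ M := by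
    intro i
    refine ⟨max (Ee i) (Ee 0 * ((i:ℝ)+1)^i), le_max_of_le_left (hEpos i).le, fun k => ?_⟩
    rcases le_or_gt i k with h | h
    · have hmem : i ∈ Finset.range (k+1) := Finset.mem_range.mpr (by omega)
      have hle : c k ≤ Ee i / ((k:ℝ)+1)^i :=
        Finset.inf'_le (fun m => Ee m / ((k:ℝ)+1)^m) hmem
      have hk1 : (0:ℝ) < ((k:ℝ)+1)^i := by positivity
      apply le_max_of_le_left
      calc c k * ((k:ℝ)+1)^i ≤ (Ee i / ((k:ℝ)+1)^i) * ((k:ℝ)+1)^i :=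
            mul_le_mul_of_nonneg_right hle hk1.le
        _ = Ee i := div_mul_cancel₀ _ (ne_of_gt hk1)
    · have hmem : 0 ∈ Finset.range (k+1) := by simp
      have h0 : c k ≤ Ee 0 := by
        have := Finset.inf'_le (fun m => Ee m / ((k:ℝ)+1)^m) hmem
        simpa only [pow_zero, div_one] using this
      apply le_max_of_le_right
      apply mul_le_mul h0 _ (by positivity) (hEpos 0).le
      apply pow_le_pow_left₀ (by positivity)
      have : (k:ℝ) + 1 ≤ (i:ℝ) + 1 := by
        have : (k:ℝ) ≤ (i:ℝ) := by exact_mod_cast h.le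
        linarith
      linarith
  set ψ : SchwartzMap ℝ ℝ := psiSchwartz c hcpos hcdecay with hψ
  have hg : Function.HasTemperateGrowth (fun x : EuclideanSpace ℝ (Fin n) => ‖x‖^2) :=
    normSq_hasTemperateGrowth
  have hupper : ∃ (kk : ℕ) (CC : ℝ), ∀ x : EuclideanSpace ℝ (Fin n),
      ‖x‖ ≤ CC * (1 + ‖(fun x : EuclideanSpace ℝ (Fin n) => ‖x‖^2) x‖)^kk := by
    refine ⟨1, 1, fun x => ?_⟩
    simp only [pow_one, one_mul, Real.norm_eq_abs, abs_of_nonneg (sq_nonneg ‖x‖)]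
    nlinarith [norm_nonneg x]
  set Φ : SchwartzMap (EuclideanSpace ℝ (Fin n)) ℝ :=
    SchwartzMap.compCLM (𝕜 := ℝ) hg hupper ψ with hΦ
  have hΦapp : ∀ x : EuclideanSpace ℝ (Fin n), Φ x = psi c (‖x‖^2) := fun x => rfl
  refine ⟨Φ, ?_, ⟨fun r => psi c (r^2), ?_, ?_⟩, ?_⟩
  · intro x
    rw [hΦapp]
    exact psi_pos c hcpos hcdecay _
  · intro x
    rw [hΦapp]
  · intro r₁ r₂ h1 h2
    apply psi_anti c hcpos hcdecay (by positivity)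
    apply pow_le_pow_left₀ h1 h2
  · intro x
    rw [hΦapp]
    set t : ℝ := ‖x‖^2 with ht
    have ht0 : 0 ≤ t := sq_nonneg _
    set K : ℕ := ⌊t⌋₊ with hK
    have step1 : |f x| ≤ c K := by
      apply Finset.le_inf'
      intro m hm
      rw [le_div_iff₀ (by positivity)]
      have hfloor : (K:ℝ) ≤ t := Nat.floor_le ht0
      have h1 : ((K:ℝ)+1)^m ≤ (1+t)^m :=
        pow_le_pow_left₀ (by positivity) (by linarith) m
      calc |f x| * ((K:ℝ)+1)^m ≤ |f x| * (1+t)^m :=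
            mul_le_mul_of_nonneg_left h1 (abs_nonneg _)
        _ = (1+‖x‖^2)^m * |f x| := by rw [mul_comm, ht]
        _ ≤ D m := hfD m x
        _ ≤ Ee m := hDE m
    have step2 : c K ≤ psi c t := by
      apply le_psi c hcpos hcdecay K t
      rw [abs_of_nonneg ht0]
      have := Nat.lt_floor_add_one t
      push_cast at this ⊢
      linarith
    exact step1.trans step2
end

section
/- Let Φ be a Schwartz function on the space M_{n×m}(ℝ) of real n×m matrices. Then there exist Schwartz functions Φ̃, Φ₁, Φ₂ on M_{n×m}(ℝ), each strictly positive everywhere, such that for all X ∈ M_{n×m}(ℝ): (i) |Φ(κ₁ X κ₂)| ≤ Φ̃(X) for all κ₁ ∈ SO(n) and κ₂ ∈ SO(m); (ii) |Φ(κ₁ X)| ≤ Φ₁(X) for all κ₁ ∈ SO(n); (iii) |Φ(X κ₂)| ≤ Φ₂(X) for all κ₂ ∈ SO(m). -/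
open MeasureTheory Function Metric Set Matrix
open scoped ContDiff Convolution SchwartzMap

namespace SchwartzRotationBoundAux





/-! ### The squared Frobenius norm `Q` -/

variable {n m : ℕ}

def Q (X : Fin n → Fin m → ℝ) : ℝ := ∑ i, ∑ j, (X i j) ^ 2

lemma Q_nonneg (X : Fin n → Fin m → ℝ) : 0 ≤ Q X := by
  apply Finset.sum_nonneg; intro i _; apply Finset.sum_nonneg; intro j _; positivity

lemma sq_le_Q (X : Fin n → Fin m → ℝ) (i : Fin n) (j : Fin m) : (X i j) ^ 2 ≤ Q X := by
  have h1 : (X i j) ^ 2 ≤ ∑ j', (X i j') ^ 2 :=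
    Finset.single_le_sum (f := fun j' => (X i j') ^ 2) (fun _ _ => by positivity)
      (Finset.mem_univ j)
  refine h1.trans ?_
  exact Finset.single_le_sum (f := fun i' => ∑ j', (X i' j') ^ 2)
    (fun _ _ => Finset.sum_nonneg fun _ _ => by positivity) (Finset.mem_univ i)

lemma norm_le_one_add_Q (X : Fin n → Fin m → ℝ) : ‖X‖ ≤ 1 + Q X := by
  have hs : ‖X‖ ≤ Real.sqrt (Q X) := by
    rw [pi_norm_le_iff_of_nonneg (Real.sqrt_nonneg _)]
    intro i
    rw [pi_norm_le_iff_of_nonneg (Real.sqrt_nonneg _)]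
    intro j
    rw [Real.norm_eq_abs, ← Real.sqrt_sq_eq_abs]
    exact Real.sqrt_le_sqrt (sq_le_Q X i j)
  refine hs.trans ?_
  nlinarith [Real.sq_sqrt (Q_nonneg X), Real.sqrt_nonneg (Q X)]

lemma Q_le (X : Fin n → Fin m → ℝ) : 1 + Q X ≤ (1 + (n * m : ℝ)) * (1 + ‖X‖) ^ 2 := by
  have h : Q X ≤ (n * m : ℝ) * ‖X‖ ^ 2 := by
    have : ∀ i j, (X i j) ^ 2 ≤ ‖X‖ ^ 2 := by
      intro i j
      have h1 : ‖X i j‖ ≤ ‖X i‖ := norm_le_pi_norm (X i) j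
      have h2 : ‖X i‖ ≤ ‖X‖ := norm_le_pi_norm X i
      have := h1.trans h2
      rw [Real.norm_eq_abs] at this
      nlinarith [abs_nonneg (X i j), le_abs_self (X i j), neg_abs_le (X i j)]
    calc Q X ≤ ∑ _i : Fin n, ∑ _j : Fin m, ‖X‖ ^ 2 :=
          Finset.sum_le_sum fun i _ => Finset.sum_le_sum fun j _ => this i j
      _ = (n * m : ℝ) * ‖X‖ ^ 2 := by
          simp [Finset.sum_const, mul_assoc]
  have hnm : (0:ℝ) ≤ (n * m : ℝ) := by positivity
  push_cast at h ⊢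
  nlinarith [norm_nonneg X, sq_nonneg (‖X‖)]








/-- The Frobenius inner product as a bilinear map. -/
def Blin (n m : ℕ) : (Fin n → Fin m → ℝ) →ₗ[ℝ] (Fin n → Fin m → ℝ) →ₗ[ℝ] ℝ :=
  LinearMap.mk₂ ℝ (fun X Y => ∑ i, ∑ j, X i j * Y i j)
    (fun X X' Y => by simp [add_mul, Finset.sum_add_distrib])
    (fun c X Y => by simp [Finset.mul_sum, mul_assoc])
    (fun X Y Y' => by simp [mul_add, Finset.sum_add_distrib])
    (fun c X Y => by simp [Finset.mul_sum]; ring_nf; simp [mul_comm, mul_left_comm])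

noncomputable def Bc (n m : ℕ) : (Fin n → Fin m → ℝ) →L[ℝ] (Fin n → Fin m → ℝ) →L[ℝ] ℝ :=
  LinearMap.toContinuousLinearMap
    ((LinearMap.toContinuousLinearMap :
        ((Fin n → Fin m → ℝ) →ₗ[ℝ] ℝ) ≃ₗ[ℝ] ((Fin n → Fin m → ℝ) →L[ℝ] ℝ)).toLinearMap.comp
      (Blin n m))

lemma Bc_apply (X Y : Fin n → Fin m → ℝ) : Bc n m X Y = ∑ i, ∑ j, X i j * Y i j := rfl

lemma Q_eq_Bc (X : Fin n → Fin m → ℝ) : Q X = Bc n m X X := by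
  rw [Bc_apply]; unfold Q; congr 1; ext i; congr 1; ext j; ring

lemma hasFDerivAt_Q (X : Fin n → Fin m → ℝ) :
    HasFDerivAt Q ((Bc n m + (Bc n m).flip) X) X := by
  have hdiag : HasFDerivAt (fun Y : Fin n → Fin m → ℝ => (Y, Y))
      ((ContinuousLinearMap.id ℝ _).prod (ContinuousLinearMap.id ℝ _)) X :=
    (hasFDerivAt_id X).prodMk (hasFDerivAt_id X)
  have hbil := (Bc n m).isBoundedBilinearMap.hasFDerivAt (X, X)
  have h := HasFDerivAt.comp (f := fun Y : Fin n → Fin m → ℝ => (Y, Y)) X hbil hdiag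
  have heq : (fun Y : Fin n → Fin m → ℝ => Bc n m Y Y) = Q := by
    funext Y; rw [Q_eq_Bc]
  rw [show ((fun p : (Fin n → Fin m → ℝ) × (Fin n → Fin m → ℝ) => Bc n m p.1 p.2) ∘
      fun Y => (Y, Y)) = Q from heq ▸ rfl] at h
  have hEq : (((Bc n m).isBoundedBilinearMap.deriv (X, X)).comp
      ((ContinuousLinearMap.id ℝ _).prod (ContinuousLinearMap.id ℝ _)))
      = (Bc n m + (Bc n m).flip) X := by
    ext Y
    simp [IsBoundedBilinearMap.deriv_apply]
  exact hEq ▸ h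

lemma hasTemperateGrowth_Q : Function.HasTemperateGrowth (Q (n := n) (m := m)) := by
  apply Function.HasTemperateGrowth.of_fderiv (k := 2) (C := ‖Bc n m‖)
  · have : fderiv ℝ Q = ⇑(Bc n m + (Bc n m).flip) := by
      funext X; exact (hasFDerivAt_Q X).fderiv
    rw [this]
    exact (Bc n m + (Bc n m).flip).hasTemperateGrowth
  · exact fun X => (hasFDerivAt_Q X).differentiableAt
  · intro X
    rw [Q_eq_Bc]
    have h1 : ‖Bc n m X X‖ ≤ ‖Bc n m‖ * ‖X‖ * ‖X‖ :=
      (Bc n m).le_opNorm₂ X X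
    refine h1.trans ?_
    have := norm_nonneg X
    have := norm_nonneg (Bc n m)
    nlinarith








lemma Q_trace (M : Matrix (Fin n) (Fin m) ℝ) :
    Q (fun i j => M i j) = (Mᵀ * M).trace := by
  unfold Q
  simp only [Matrix.trace, Matrix.diag, Matrix.mul_apply, Matrix.transpose_apply, sq]
  exact Finset.sum_comm

lemma Q_rot {κ₁ : Matrix (Fin n) (Fin n) ℝ} (h₁ : κ₁ ∈ Matrix.specialOrthogonalGroup (Fin n) ℝ)
    {κ₂ : Matrix (Fin m) (Fin m) ℝ} (h₂ : κ₂ ∈ Matrix.specialOrthogonalGroup (Fin m) ℝ)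
    (X : Fin n → Fin m → ℝ) :
    Q (fun i j => ∑ k, ∑ l, κ₁ i k * X k l * κ₂ l j) = Q X := by
  have hk1 : κ₁ᵀ * κ₁ = 1 := by
    have h := (Matrix.mem_specialOrthogonalGroup_iff.mp h₁).1
    rw [Matrix.mem_orthogonalGroup_iff'] at h
    simpa [Matrix.star_eq_conjTranspose,
      Matrix.conjTranspose_eq_transpose_of_trivial] using h
  have hk2 : κ₂ * κ₂ᵀ = 1 := by
    have h := (Matrix.mem_specialOrthogonalGroup_iff.mp h₂).1
    rw [Matrix.mem_orthogonalGroup_iff] at h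
    simpa [Matrix.star_eq_conjTranspose,
      Matrix.conjTranspose_eq_transpose_of_trivial] using h
  set A : Matrix (Fin n) (Fin m) ℝ := Matrix.of X with hA
  have hfun : (fun i j => ∑ k, ∑ l, κ₁ i k * X k l * κ₂ l j)
      = fun i j => (κ₁ * A * κ₂) i j := by
    funext i j
    simp only [Matrix.mul_apply, Finset.sum_mul, hA, Matrix.of_apply]
    rw [Finset.sum_comm]
  rw [hfun, Q_trace]
  have hmat : (κ₁ * A * κ₂)ᵀ * (κ₁ * A * κ₂) = κ₂ᵀ * (Aᵀ * A * κ₂) := by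
    rw [Matrix.transpose_mul, Matrix.transpose_mul]
    simp only [Matrix.mul_assoc]
    rw [← Matrix.mul_assoc κ₁ᵀ κ₁ (A * κ₂), hk1, Matrix.one_mul]
  rw [hmat, Matrix.trace_mul_comm, Matrix.mul_assoc, Matrix.mul_assoc, hk2, Matrix.mul_one]
  rw [show Q X = (Aᵀ * A).trace from Q_trace A]






/-! ### The one-dimensional rapidly decreasing envelope -/

noncomputable def mfun (C : ℕ → ℝ) (t : ℝ) : ℝ :=
  ⨅ k : ℕ, (C k + (k : ℝ) ^ k) * ((1 + max t 0) ^ k)⁻¹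

variable {C : ℕ → ℝ}

lemma one_add_max_pos (t : ℝ) : (0 : ℝ) < 1 + max t 0 := by
  have := le_max_right t 0; linarith

lemma cast_pow_self_pos (k : ℕ) : (0 : ℝ) < (k : ℝ) ^ k := by
  rcases Nat.eq_zero_or_pos k with rfl | hk
  · simp
  · have : (0 : ℝ) < (k : ℝ) := by exact_mod_cast hk
    positivity

lemma term_nonneg (hC0 : ∀ k, 0 ≤ C k) (t : ℝ) (k : ℕ) :
    0 ≤ (C k + (k : ℝ) ^ k) * ((1 + max t 0) ^ k)⁻¹ := by
  have h1 := one_add_max_pos t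
  have h2 := hC0 k
  have h3 := (cast_pow_self_pos k).le
  positivity

lemma mfun_bddBelow (hC0 : ∀ k, 0 ≤ C k) (t : ℝ) :
    BddBelow (Set.range fun k : ℕ => (C k + (k : ℝ) ^ k) * ((1 + max t 0) ^ k)⁻¹) :=
  ⟨0, by rintro x ⟨k, rfl⟩; exact term_nonneg hC0 t k⟩

lemma mfun_nonneg (hC0 : ∀ k, 0 ≤ C k) (t : ℝ) : 0 ≤ mfun C t :=
  le_ciInf fun k => term_nonneg hC0 t k

lemma mfun_le_term (hC0 : ∀ k, 0 ≤ C k) (t : ℝ) (k : ℕ) :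
    mfun C t ≤ (C k + (k : ℝ) ^ k) * ((1 + max t 0) ^ k)⁻¹ :=
  ciInf_le (mfun_bddBelow hC0 t) k

lemma mfun_le_C0 (hC0 : ∀ k, 0 ≤ C k) (t : ℝ) : mfun C t ≤ C 0 + 1 := by
  have h := mfun_le_term hC0 t 0
  simpa using h

lemma mfun_antitone (hC0 : ∀ k, 0 ≤ C k) : Antitone (mfun C) := by
  intro s t hst
  refine le_ciInf fun k => ?_
  refine (mfun_le_term hC0 t k).trans ?_
  have h0 : (0 : ℝ) < 1 + max s 0 := one_add_max_pos s
  have h1 : (1 + max s 0) ≤ 1 + max t 0 := by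
    have := max_le_max hst (le_refl (0:ℝ)); linarith
  have h2 : ((1 + max t 0) ^ k)⁻¹ ≤ ((1 + max s 0) ^ k)⁻¹ := by
    apply inv_anti₀ (by positivity)
    exact pow_le_pow_left₀ h0.le h1 k
  have h3 : 0 ≤ C k + (k : ℝ) ^ k := by
    have := hC0 k; have := (cast_pow_self_pos k).le; linarith
  exact mul_le_mul_of_nonneg_left h2 h3

lemma mfun_pos (hC0 : ∀ k, 0 ≤ C k) (t : ℝ) : 0 < mfun C t := by
  set a : ℝ := 1 + max t 0 with ha
  have ha1 : (1 : ℝ) ≤ a := by rw [ha]; have := le_max_right t 0; linarith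
  have ha0 : (0 : ℝ) < a := by linarith
  set K : ℕ := ⌈a⌉₊ with hK
  set b : ℕ → ℝ := fun k => ((k : ℝ) ^ k) * (a ^ k)⁻¹ with hb
  have hb_pos : ∀ k, 0 < b k := by
    intro k
    have h1 := cast_pow_self_pos k
    have : (0:ℝ) < (a ^ k)⁻¹ := by positivity
    exact mul_pos h1 this
  have hbK : ∀ k, K + 1 ≤ k → (1 : ℝ) ≤ b k := by
    intro k hk
    have hak : a ≤ (k : ℝ) := by
      calc a ≤ (⌈a⌉₊ : ℝ) := Nat.le_ceil a
        _ ≤ (k : ℝ) := by exact_mod_cast le_trans (Nat.le_succ K) hk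
    have hpow : a ^ k ≤ (k : ℝ) ^ k := pow_le_pow_left₀ ha0.le hak k
    have h1k : (1:ℝ) ≤ (k:ℝ) ^ k * (a ^ k)⁻¹ := by
      rw [← div_eq_mul_inv, le_div_iff₀ (by positivity)]
      simpa using hpow
    simpa [hb] using h1k
  set ε : ℝ := min 1 ((Finset.range (K + 1)).inf' (by simp) b) with hε
  have hε_pos : 0 < ε := by
    apply lt_min one_pos
    rw [Finset.lt_inf'_iff]
    exact fun k _ => hb_pos k
  have hεb : ∀ k, ε ≤ b k := by
    intro k
    rcases le_or_gt k K with hk | hk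
    · exact le_trans (min_le_right _ _)
        (Finset.inf'_le b (Finset.mem_range.2 (Nat.lt_succ_of_le hk)))
    · exact le_trans (min_le_left _ _) (hbK k hk)
  have : ε ≤ mfun C t := by
    refine le_ciInf fun k => ?_
    refine (hεb k).trans ?_
    rw [hb]
    apply mul_le_mul_of_nonneg_right _ (by positivity)
    exact le_add_of_nonneg_left (hC0 k)
  linarith

lemma le_mfun (hC0 : ∀ k, 0 ≤ C k) {t B : ℝ}
    (h : ∀ k : ℕ, B ≤ (C k + (k : ℝ) ^ k) * ((1 + max t 0) ^ k)⁻¹) : B ≤ mfun C t :=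
  le_ciInf h



/-! ### Bump function facts -/

noncomputable def bmp : ContDiffBump (0 : ℝ) := ⟨1, 2, one_pos, one_lt_two⟩

noncomputable def φn : ℝ → ℝ := bmp.normed volume

lemma φn_smooth : ContDiff ℝ ∞ φn := bmp.contDiff_normed (n := ⊤)

lemma φn_nonneg : ∀ x, 0 ≤ φn x := bmp.nonneg_normed

lemma φn_compact : HasCompactSupport φn := bmp.hasCompactSupport_normed

lemma φn_tsupport : tsupport φn ⊆ closedBall (0 : ℝ) 2 := by
  apply closure_minimal _ Metric.isClosed_closedBall
  rw [show support φn = ball (0:ℝ) bmp.rOut from bmp.support_normed_eq]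
  exact ball_subset_closedBall

lemma φn_integrable : Integrable φn := bmp.integrable_normed

lemma φn_integral : ∫ x, φn x = 1 := bmp.integral_normed

lemma ψ_smooth (N : ℕ) : ContDiff ℝ ∞ (iteratedDeriv N φn) := by
  rw [iteratedDeriv_eq_iterate]
  exact φn_smooth.iterate_deriv N

lemma ψ_tsupport (N : ℕ) : tsupport (iteratedDeriv N φn) ⊆ closedBall (0 : ℝ) 2 := by
  induction N with
  | zero => simpa [iteratedDeriv_zero] using φn_tsupport
  | succ N ih =>
    rw [iteratedDeriv_succ]
    exact (closure_minimal (support_deriv_subset) isClosed_closure).trans ih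

lemma ψ_compact (N : ℕ) : HasCompactSupport (iteratedDeriv N φn) :=
  IsCompact.of_isClosed_subset (isCompact_closedBall 0 2) isClosed_closure (ψ_tsupport N)

lemma ψ_integrable (N : ℕ) : Integrable (iteratedDeriv N φn) :=
  ((ψ_smooth N).continuous).integrable_of_hasCompactSupport (ψ_compact N)

lemma ψ_support (N : ℕ) : support (iteratedDeriv N φn) ⊆ closedBall (0 : ℝ) 2 :=
  subset_tsupport _ |>.trans (ψ_tsupport N)

/-! ### The convolution `h0` -/

noncomputable def w (C : ℕ → ℝ) (t : ℝ) : ℝ := mfun C (|t| - 3)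

noncomputable def h0 (C : ℕ → ℝ) : ℝ → ℝ :=
  w C ⋆[ContinuousLinearMap.lsmul ℝ ℝ, volume] φn

lemma w_nonneg (hC0 : ∀ k, 0 ≤ C k) (t : ℝ) : 0 ≤ w C t := mfun_nonneg hC0 _

lemma w_norm_le (hC0 : ∀ k, 0 ≤ C k) (t : ℝ) : ‖w C t‖ ≤ C 0 + 1 := by
  rw [Real.norm_eq_abs, abs_of_nonneg (w_nonneg hC0 t)]
  exact mfun_le_C0 hC0 _

lemma w_measurable (hC0 : ∀ k, 0 ≤ C k) : Measurable (w C) :=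
  ((mfun_antitone hC0).measurable).comp ((continuous_abs.sub continuous_const).measurable)

lemma w_locInt (hC0 : ∀ k, 0 ≤ C k) : LocallyIntegrable (w C) volume := by
  rw [locallyIntegrable_iff]
  intro K hK
  apply Measure.integrableOn_of_bounded hK.measure_lt_top.ne
    ((w_measurable hC0).aestronglyMeasurable)
  filter_upwards with x using w_norm_le hC0 x

lemma h0_iteratedDeriv (hC0 : ∀ k, 0 ≤ C k) (N : ℕ) :
    iteratedDeriv N (h0 C)
      = w C ⋆[ContinuousLinearMap.lsmul ℝ ℝ, volume] iteratedDeriv N φn := by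
  induction N with
  | zero => simp [iteratedDeriv_zero, h0]
  | succ N ih =>
    rw [iteratedDeriv_succ, ih]
    funext x
    have hd := HasCompactSupport.hasDerivAt_convolution_right
      (ContinuousLinearMap.lsmul ℝ ℝ) (w_locInt hC0) (ψ_compact N)
      ((ψ_smooth N).of_le (by exact_mod_cast le_top)) x
    rw [hd.deriv, ← iteratedDeriv_succ]

lemma conv_bound (hC0 : ∀ k, 0 ≤ C k) {ψ : ℝ → ℝ} (hsupp : support ψ ⊆ closedBall (0 : ℝ) 2)
    (hint : Integrable ψ) (x : ℝ) :
    ‖(w C ⋆[ContinuousLinearMap.lsmul ℝ ℝ, volume] ψ) x‖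
      ≤ (∫ s, ‖ψ s‖) * mfun C (|x| - 5) := by
  have hmf5 : 0 ≤ mfun C (|x| - 5) := mfun_nonneg hC0 _
  have hptwise : ∀ s, ‖w C s • ψ (x - s)‖ ≤ mfun C (|x| - 5) * ‖ψ (x - s)‖ := by
    intro s
    rw [norm_smul]
    by_cases hzero : ψ (x - s) = 0
    · simp [hzero]
    · have hmem : x - s ∈ closedBall (0 : ℝ) 2 := hsupp (mem_support.2 hzero)
      rw [mem_closedBall, dist_zero_right, Real.norm_eq_abs] at hmem
      have habs : |x| ≤ |x - s| + |s| := by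
        calc |x| = |x - s + s| := by ring_nf
          _ ≤ |x - s| + |s| := abs_add_le _ _
      have h5 : |x| - 5 ≤ |s| - 3 := by linarith
      have hw : w C s ≤ mfun C (|x| - 5) := mfun_antitone hC0 h5
      rw [Real.norm_eq_abs, abs_of_nonneg (w_nonneg hC0 s)]
      exact mul_le_mul_of_nonneg_right hw (norm_nonneg _)
  have hbint : Integrable fun s => mfun C (|x| - 5) * ‖ψ (x - s)‖ :=
    ((hint.norm).comp_sub_left x).const_mul _
  rw [convolution_lsmul]
  calc ‖∫ s, w C s • ψ (x - s)‖ ≤ ∫ s, mfun C (|x| - 5) * ‖ψ (x - s)‖ :=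
        norm_integral_le_of_norm_le hbint (Filter.Eventually.of_forall hptwise)
    _ = mfun C (|x| - 5) * ∫ s, ‖ψ (x - s)‖ := integral_const_mul _ _
    _ = (∫ s, ‖ψ s‖) * mfun C (|x| - 5) := by
        rw [integral_sub_left_eq_self (fun s => ‖ψ s‖) volume x, mul_comm]

lemma h0_ge (hC0 : ∀ k, 0 ≤ C k) (x : ℝ) : mfun C |x| ≤ h0 C x := by
  have hce : ConvolutionExistsAt (w C) φn x (ContinuousLinearMap.lsmul ℝ ℝ) volume :=
    HasCompactSupport.convolutionExists_right
      (ContinuousLinearMap.lsmul ℝ ℝ) φn_compact (w_locInt hC0) bmp.continuous_normed x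
  have hce' : Integrable fun s => w C s • φn (x - s) := by
    simpa [ConvolutionExistsAt, ContinuousLinearMap.lsmul_apply] using hce
  have hint1 : Integrable fun s => mfun C |x| * φn (x - s) :=
    (φn_integrable.comp_sub_left x).const_mul _
  have hpt : ∀ s, mfun C |x| * φn (x - s) ≤ w C s • φn (x - s) := by
    intro s
    rw [smul_eq_mul]
    by_cases hzero : φn (x - s) = 0
    · simp [hzero]
    · have hmem : x - s ∈ closedBall (0 : ℝ) 2 :=
        (subset_tsupport φn |>.trans φn_tsupport) (mem_support.2 hzero)
      rw [mem_closedBall, dist_zero_right, Real.norm_eq_abs] at hmem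
      have habs : |s| ≤ |x - s| + |x| := by
        calc |s| = |-(x - s) + x| := by ring_nf
          _ ≤ |-(x - s)| + |x| := abs_add_le _ _
          _ = |x - s| + |x| := by rw [abs_neg]
      have h3 : |s| - 3 ≤ |x| := by linarith
      have hw : mfun C |x| ≤ w C s := mfun_antitone hC0 h3
      exact mul_le_mul_of_nonneg_right hw (φn_nonneg _)
  have hmono := integral_mono hint1 hce' hpt
  have heval : ∫ s, mfun C |x| * φn (x - s) = mfun C |x| := by
    rw [integral_const_mul, integral_sub_left_eq_self φn volume x, φn_integral, mul_one]
  rw [heval] at hmono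
  have : (w C ⋆[ContinuousLinearMap.lsmul ℝ ℝ, volume] φn) x = ∫ s, w C s • φn (x - s) := by
    rw [convolution_lsmul]
  rw [h0, this]
  exact hmono

lemma h0_pos (hC0 : ∀ k, 0 ≤ C k) (x : ℝ) : 0 < h0 C x :=
  lt_of_lt_of_le (mfun_pos hC0 _) (h0_ge hC0 x)

lemma h0_smooth (hC0 : ∀ k, 0 ≤ C k) : ContDiff ℝ ∞ (h0 C) :=
  HasCompactSupport.contDiff_convolution_right _ φn_compact (w_locInt hC0)
    (φn_smooth)

lemma h0_decay (hC0 : ∀ k, 0 ≤ C k) (k N : ℕ) :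
    ∃ Cb : ℝ, ∀ x : ℝ, ‖x‖ ^ k * ‖iteratedFDeriv ℝ N (h0 C) x‖ ≤ Cb := by
  set DN : ℝ := ∫ s, ‖iteratedDeriv N φn s‖ with hDN
  have hDN0 : 0 ≤ DN := integral_nonneg fun s => norm_nonneg _
  refine ⟨DN * (6 ^ k * (C k + (k : ℝ) ^ k) + 6 ^ k * (C 0 + 1)), fun x => ?_⟩
  have h1 : ‖iteratedFDeriv ℝ N (h0 C) x‖ = ‖iteratedDeriv N (h0 C) x‖ :=
    norm_iteratedFDeriv_eq_norm_iteratedDeriv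
  rw [h1, h0_iteratedDeriv hC0 N]
  have h2 : ‖(w C ⋆[ContinuousLinearMap.lsmul ℝ ℝ, volume] iteratedDeriv N φn) x‖
      ≤ DN * mfun C (|x| - 5) := conv_bound hC0 (ψ_support N) (ψ_integrable N) x
  have hkk := (cast_pow_self_pos k).le
  have hCk := hC0 k
  have hC00 := hC0 0
  have key : |x| ^ k * mfun C (|x| - 5)
      ≤ 6 ^ k * (C k + (k : ℝ) ^ k) + 6 ^ k * (C 0 + 1) := by
    by_cases hx : |x| ≤ 6
    · have hle : |x| ^ k * mfun C (|x| - 5) ≤ 6 ^ k * (C 0 + 1) :=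
        mul_le_mul (pow_le_pow_left₀ (abs_nonneg x) hx k) (mfun_le_C0 hC0 _)
          (mfun_nonneg hC0 _) (by positivity)
      have h6 : (0:ℝ) ≤ 6 ^ k * (C k + (k : ℝ) ^ k) := by positivity
      linarith
    · push_neg at hx
      have ha : max (|x| - 5) 0 = |x| - 5 := max_eq_left (by linarith)
      have hm := mfun_le_term hC0 (|x| - 5) k
      rw [ha] at hm
      have hb : (1 + (|x| - 5)) = |x| - 4 := by ring
      rw [hb] at hm
      have h4 : (0 : ℝ) < |x| - 4 := by linarith
      have hfrac : |x| ^ k / (|x| - 4) ^ k ≤ 6 ^ k := by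
        rw [div_le_iff₀ (by positivity)]
        calc |x| ^ k ≤ (6 * (|x| - 4)) ^ k :=
              pow_le_pow_left₀ (abs_nonneg x) (by linarith) k
          _ = 6 ^ k * (|x| - 4) ^ k := mul_pow _ _ _
      have hstep : |x| ^ k * mfun C (|x| - 5)
          ≤ (C k + (k : ℝ) ^ k) * (|x| ^ k / (|x| - 4) ^ k) := by
        have := mul_le_mul_of_nonneg_left hm (pow_nonneg (abs_nonneg x) k)
        calc |x| ^ k * mfun C (|x| - 5)
            ≤ |x| ^ k * ((C k + (k : ℝ) ^ k) * (((|x| - 4) ^ k)⁻¹)) := this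
          _ = (C k + (k : ℝ) ^ k) * (|x| ^ k / (|x| - 4) ^ k) := by ring
      have : |x| ^ k * mfun C (|x| - 5) ≤ (C k + (k : ℝ) ^ k) * 6 ^ k :=
        hstep.trans (mul_le_mul_of_nonneg_left hfrac (by positivity))
      have h7 : (0:ℝ) ≤ 6 ^ k * (C 0 + 1) := by positivity
      nlinarith
  calc ‖x‖ ^ k * ‖(w C ⋆[ContinuousLinearMap.lsmul ℝ ℝ, volume] iteratedDeriv N φn) x‖
      ≤ ‖x‖ ^ k * (DN * mfun C (|x| - 5)) :=
        mul_le_mul_of_nonneg_left h2 (by positivity)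
    _ = DN * (|x| ^ k * mfun C (|x| - 5)) := by rw [Real.norm_eq_abs]; ring
    _ ≤ DN * (6 ^ k * (C k + (k : ℝ) ^ k) + 6 ^ k * (C 0 + 1)) :=
        mul_le_mul_of_nonneg_left key hDN0

noncomputable def h0S (C : ℕ → ℝ) (hC0 : ∀ k, 0 ≤ C k) : 𝓢(ℝ, ℝ) :=
  ⟨h0 C, h0_smooth hC0, h0_decay hC0⟩

@[simp] lemma h0S_apply (hC0 : ∀ k, 0 ≤ C k) (x : ℝ) : h0S C hC0 x = h0 C x := rfl




end SchwartzRotationBoundAux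

open SchwartzRotationBoundAux in
/-- **Bounds of rotation translations of matrix Schwartz functions** (real case).
For a Schwartz function `Φ` on the space of `n × m` real matrices (modelled as
`Fin n → Fin m → ℝ`), there are strictly positive Schwartz functions `Φt`, `Φ₁`, `Φ₂`
dominating `‖Φ(κ₁ X κ₂)‖`, `‖Φ(κ₁ X)‖`, `‖Φ(X κ₂)‖` uniformly over
`κ₁ ∈ SO(n)`, `κ₂ ∈ SO(m)`. -/
theorem schwartz_rotation_bound (n m : ℕ)
    (Φ : SchwartzMap (Fin n → Fin m → ℝ) ℂ) :
    ∃ Φt Φ₁ Φ₂ : SchwartzMap (Fin n → Fin m → ℝ) ℝ,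
      (∀ X, 0 < Φt X) ∧ (∀ X, 0 < Φ₁ X) ∧ (∀ X, 0 < Φ₂ X) ∧
      (∀ κ₁ ∈ Matrix.specialOrthogonalGroup (Fin n) ℝ,
        ∀ κ₂ ∈ Matrix.specialOrthogonalGroup (Fin m) ℝ,
        ∀ X : Fin n → Fin m → ℝ,
          ‖Φ (fun i j => ∑ k, ∑ l, κ₁ i k * X k l * κ₂ l j)‖ ≤ Φt X) ∧
      (∀ κ₁ ∈ Matrix.specialOrthogonalGroup (Fin n) ℝ,
        ∀ X : Fin n → Fin m → ℝ,
          ‖Φ (fun i j => ∑ k, κ₁ i k * X k j)‖ ≤ Φ₁ X) ∧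
      (∀ κ₂ ∈ Matrix.specialOrthogonalGroup (Fin m) ℝ,
        ∀ X : Fin n → Fin m → ℝ,
          ‖Φ (fun i j => ∑ l, X i l * κ₂ l j)‖ ≤ Φ₂ X) := by
  classical
  -- Step 1: rapid decay constants for `Φ` in terms of `Q`.
  have key : ∀ k : ℕ, ∃ Ck : ℝ, 0 ≤ Ck ∧ ∀ Y : Fin n → Fin m → ℝ,
      (1 + Q Y) ^ k * ‖Φ Y‖ ≤ Ck := by
    intro k
    set Dk : ℝ := 2 ^ (2 * k)
      * (Finset.Iic (2 * k, 0)).sup (fun p => SchwartzMap.seminorm ℝ p.1 p.2) Φ with hDk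
    have hDk0 : 0 ≤ Dk := by
      have : 0 ≤ ((Finset.Iic (2 * k, 0)).sup
          (fun p => SchwartzMap.seminorm ℝ p.1 p.2)) Φ := apply_nonneg _ _
      positivity
    refine ⟨(1 + (n * m : ℝ)) ^ k * Dk, by positivity, fun Y => ?_⟩
    have hQ0 : (0:ℝ) ≤ 1 + Q Y := by have := Q_nonneg Y; linarith
    have h1 : (1 + Q Y) ^ k ≤ ((1 + (n * m : ℝ)) * (1 + ‖Y‖) ^ 2) ^ k := by
      apply pow_le_pow_left₀ hQ0
      have := Q_le Y
      push_cast at this ⊢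
      linarith
    have h2 : (1 + ‖Y‖) ^ (2 * k) * ‖Φ Y‖ ≤ Dk := by
      have h := SchwartzMap.one_add_le_sup_seminorm_apply (𝕜 := ℝ)
        (m := (2 * k, 0)) le_rfl le_rfl Φ Y
      rw [norm_iteratedFDeriv_zero] at h
      exact h
    calc (1 + Q Y) ^ k * ‖Φ Y‖
        ≤ ((1 + (n * m : ℝ)) * (1 + ‖Y‖) ^ 2) ^ k * ‖Φ Y‖ :=
          mul_le_mul_of_nonneg_right h1 (norm_nonneg _)
      _ = (1 + (n * m : ℝ)) ^ k * ((1 + ‖Y‖) ^ (2 * k) * ‖Φ Y‖) := by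
          rw [mul_pow, ← pow_mul]; ring
      _ ≤ (1 + (n * m : ℝ)) ^ k * Dk :=
          mul_le_mul_of_nonneg_left h2 (by positivity)
  choose C hC0 hC using key
  -- Step 2: the Schwartz majorant `Φt = h0 C ∘ Q`.
  have hupper : ∃ (kk : ℕ) (CC : ℝ), ∀ X : Fin n → Fin m → ℝ,
      ‖X‖ ≤ CC * (1 + ‖Q X‖) ^ kk := by
    refine ⟨1, 1, fun X => ?_⟩
    rw [Real.norm_eq_abs, abs_of_nonneg (Q_nonneg X), pow_one, one_mul]
    exact norm_le_one_add_Q X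
  set Φt : SchwartzMap (Fin n → Fin m → ℝ) ℝ :=
    SchwartzMap.compCLM ℝ hasTemperateGrowth_Q hupper (h0S C hC0) with hΦt
  have hΦt_apply : ∀ X, Φt X = h0 C (Q X) := fun X => rfl
  have hΦt_pos : ∀ X, 0 < Φt X := by
    intro X; rw [hΦt_apply]; exact h0_pos hC0 _
  -- Step 3: the key domination property.
  have main : ∀ Y X : Fin n → Fin m → ℝ, Q Y = Q X → ‖Φ Y‖ ≤ Φt X := by
    intro Y X hQXY
    have h1 : mfun C |Q X| ≤ h0 C (Q X) := h0_ge hC0 _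
    have h2 : ‖Φ Y‖ ≤ mfun C |Q X| := by
      rw [abs_of_nonneg (Q_nonneg X), ← hQXY]
      apply le_mfun hC0
      intro k
      have hmax : max (Q Y) 0 = Q Y := max_eq_left (Q_nonneg Y)
      rw [hmax]
      have hQpos : (0:ℝ) < 1 + Q Y := by have := Q_nonneg Y; linarith
      have hstep : ‖Φ Y‖ ≤ C k * ((1 + Q Y) ^ k)⁻¹ := by
        rw [← div_eq_mul_inv, le_div_iff₀ (by positivity)]
        have := hC k Y
        linarith [hC k Y]
      refine hstep.trans ?_
      apply mul_le_mul_of_nonneg_right _ (by positivity)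
      exact le_add_of_nonneg_right (cast_pow_self_pos k).le
    rw [hΦt_apply]
    exact h2.trans h1
  refine ⟨Φt, Φt, Φt, hΦt_pos, hΦt_pos, hΦt_pos, ?_, ?_, ?_⟩
  · intro κ₁ h₁ κ₂ h₂ X
    exact main _ X (Q_rot h₁ h₂ X)
  · intro κ₁ h₁ X
    have h1m : (1 : Matrix (Fin m) (Fin m) ℝ) ∈ Matrix.specialOrthogonalGroup (Fin m) ℝ :=
      one_mem _
    have hQr := Q_rot h₁ h1m X
    have hfun : (fun i j => ∑ k, ∑ l, κ₁ i k * X k l * (1 : Matrix (Fin m) (Fin m) ℝ) l j)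
        = fun i j => ∑ k, κ₁ i k * X k j := by
      funext i j
      simp [Matrix.one_apply, mul_ite, mul_one, mul_zero]
    rw [hfun] at hQr
    exact main _ X hQr
  · intro κ₂ h₂ X
    have h1n : (1 : Matrix (Fin n) (Fin n) ℝ) ∈ Matrix.specialOrthogonalGroup (Fin n) ℝ :=
      one_mem _
    have hQr := Q_rot h1n h₂ X
    have hfun : (fun i j => ∑ k, ∑ l, (1 : Matrix (Fin n) (Fin n) ℝ) i k * X k l * κ₂ l j)
        = fun i j => ∑ l, X i l * κ₂ l j := by
      funext i j
      simp [Matrix.one_apply, ite_mul, one_mul, zero_mul]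
    rw [hfun] at hQr
    exact main _ X hQr
end
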